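/- Let S : X → E be an admissible impact map and A ⊂ E an admissible acceptance set. Assume S is positively homogeneous, A is a cone, S(e) is a strictly positive real constant (where e = (1,…,1) ∈ ℝ^d is identified with a constant random vector), and the set bar(A) ∩ {W ∈ L^1 : ‖W‖_{L^1} ≤ 1} is σ(E',E)-compact. Then σ_{S^{-1}(A)} = α. -/

import Mathlib

/-!
Weak duality `α ≤ σ_{S⁻¹(A)}` holds in general, since `σ_A(W) ≤ E[S(X) W]` for `X ∈ S⁻¹(A)`.
Since `S⁻¹(A)` is a cone, `σ_{S⁻¹(A)}(Z)` is `-∞` unless `E[⟨X, Z⟩] ≥ 0` on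
`S⁻¹(A)`, where it is `0`; and `σ_A = 0` on `bar(A)`. It then suffices to find `W ∈ bar(A)` with
`E[S(X) W] ≤ E[⟨X, Z⟩]` for all `X`. Finitely many of these constraints, with slack `1`, are
solved by separating a cone from a box in `ℝⁿ`: a failure would produce, by concavity and
homogeneity of `S` and the bipolar description `A = {U : E[U W] ≥ 0 for all W ∈ bar(A)}`, a
point of `S⁻¹(A)` with negative pairing. The constraint at `e` bounds `‖W‖₁` by a multiple of
`1 / S(e)`, so compactness of `bar(A) ∩ {‖W‖₁ ≤ 1}` yields a common solution of all
constraints, and homogeneity of `S` removes the slack.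
-/

open MeasureTheory Filter Set
open scoped ENNReal

noncomputable section

namespace SystemicRisk

variable {Ω : Type*} [MeasurableSpace Ω]

/-- A random variable is essentially bounded. -/
def EssBdd {μ : Measure Ω} (f : Ω →ₘ[μ] ℝ) : Prop :=
  ∃ C : ℝ, ∀ᵐ ω ∂μ, |f ω| ≤ C

/-- The scalar pairing `E[U W]`. -/
def ip {μ : Measure Ω} (U W : Ω →ₘ[μ] ℝ) : ℝ := ∫ ω, U ω * W ω ∂μ

/-- The Köthe dual of a set of random variables. -/
def kdual {μ : Measure Ω} (L : Set (Ω →ₘ[μ] ℝ)) : Set (Ω →ₘ[μ] ℝ) :=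
  {Z | ∀ f ∈ L, Integrable (fun ω => f ω * Z ω) μ}

/-- `nrm` is a Banach lattice norm on `L` (w.r.t. the a.s. order). -/
structure IsBLNorm {μ : Measure Ω} (L : Set (Ω →ₘ[μ] ℝ)) (nrm : (Ω →ₘ[μ] ℝ) → ℝ) : Prop where
  nonneg : ∀ f ∈ L, 0 ≤ nrm f
  eq_zero_iff : ∀ f ∈ L, (nrm f = 0 ↔ f = 0)
  smul_eq : ∀ f ∈ L, ∀ c : ℝ, nrm (c • f) = |c| * nrm f
  triangle : ∀ f ∈ L, ∀ g ∈ L, nrm (f + g) ≤ nrm f + nrm g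
  solid : ∀ f ∈ L, ∀ g ∈ L, |f| ≤ |g| → nrm f ≤ nrm g
  complete : ∀ u : ℕ → (Ω →ₘ[μ] ℝ), (∀ n, u n ∈ L) →
      (∀ ε : ℝ, 0 < ε → ∃ N : ℕ, ∀ m ≥ N, ∀ n ≥ N, nrm (u m - u n) < ε) →
      ∃ f ∈ L, ∀ ε : ℝ, 0 < ε → ∃ N : ℕ, ∀ n ≥ N, nrm (u n - f) < ε

/-- `L` is an admissible space: a linear subspace of `L^0` which is a Banach lattice
(for the a.s. order, with norm `nrm`) satisfying `L^∞ ⊆ L ⊆ L^1`. -/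
structure IsAdmissible {μ : Measure Ω} (L : Set (Ω →ₘ[μ] ℝ)) (nrm : (Ω →ₘ[μ] ℝ) → ℝ) : Prop where
  zero_mem : (0 : Ω →ₘ[μ] ℝ) ∈ L
  add_mem : ∀ f ∈ L, ∀ g ∈ L, f + g ∈ L
  smul_mem : ∀ (c : ℝ), ∀ f ∈ L, c • f ∈ L
  sup_mem : ∀ f ∈ L, ∀ g ∈ L, f ⊔ g ∈ L
  inf_mem : ∀ f ∈ L, ∀ g ∈ L, f ⊓ g ∈ L
  linfty_subset : ∀ f, EssBdd f → f ∈ L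
  subset_lone : ∀ f ∈ L, Integrable f μ
  banach : IsBLNorm L nrm

variable {d : ℕ}

/-- The product space `X = X_1 × ⋯ × X_d`. -/
def prodSet {μ : Measure Ω} (Li : Fin d → Set (Ω →ₘ[μ] ℝ)) : Set (Fin d → (Ω →ₘ[μ] ℝ)) :=
  {X | ∀ i, X i ∈ Li i}

/-- The vector pairing `E[⟨X,Z⟩] = ∑ i, E[X_i Z_i]`. -/
def pairing {μ : Measure Ω} (X Z : Fin d → (Ω →ₘ[μ] ℝ)) : ℝ := ∑ i, ip (X i) (Z i)

/-- The constant random vector associated with `m ∈ ℝ^d`. -/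
def cvec (μ : Measure Ω) (m : Fin d → ℝ) : Fin d → (Ω →ₘ[μ] ℝ) :=
  fun i => (AEEqFun.const Ω (m i) : Ω →ₘ[μ] ℝ)

/-- The weak topology `σ(P, D)` on a set of random vectors `P` induced by the pairing
with elements of `D`. -/
def wtop {μ : Measure Ω} (P D : Set (Fin d → (Ω →ₘ[μ] ℝ))) : TopologicalSpace ↥P :=
  TopologicalSpace.induced
    (fun X : ↥P => fun Z : ↥D => pairing (X : Fin d → (Ω →ₘ[μ] ℝ)) (Z : Fin d → (Ω →ₘ[μ] ℝ)))
    Pi.topologicalSpace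

/-- The weak topology `σ(P, D)` on a set of random variables `P` induced by the pairing
with elements of `D`. -/
def wtop1 {μ : Measure Ω} (P D : Set (Ω →ₘ[μ] ℝ)) : TopologicalSpace ↥P :=
  TopologicalSpace.induced
    (fun U : ↥P => fun W : ↥D => ip (U : Ω →ₘ[μ] ℝ) (W : Ω →ₘ[μ] ℝ))
    Pi.topologicalSpace

/-- An admissible impact map `S : X → E`. -/
structure IsAdmissibleImpact {μ : Measure Ω} (XX XX' : Set (Fin d → (Ω →ₘ[μ] ℝ)))
    (EE EE' : Set (Ω →ₘ[μ] ℝ)) (S : (Fin d → (Ω →ₘ[μ] ℝ)) → (Ω →ₘ[μ] ℝ)) : Prop where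
  mapsTo : ∀ X ∈ XX, S X ∈ EE
  nonconst : ∃ X ∈ XX, ∃ Y ∈ XX, S X ≠ S Y
  normalized : S 0 = 0
  mono : ∀ X ∈ XX, ∀ Y ∈ XX, X ≤ Y → S X ≤ S Y
  concave : ∀ X ∈ XX, ∀ Y ∈ XX, ∀ t : ℝ, 0 ≤ t → t ≤ 1 →
      t • S X + (1 - t) • S Y ≤ S (t • X + (1 - t) • Y)
  usc : ∀ W ∈ EE', (0 : Ω →ₘ[μ] ℝ) ≤ W →
      @UpperSemicontinuous (↥XX) ℝ (wtop XX XX') _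
        (fun X : ↥XX => ∫ ω, S (X : Fin d → (Ω →ₘ[μ] ℝ)) ω * W ω ∂μ)

/-- An admissible acceptance set `A ⊆ E` (relative to the impact map `S`). -/
structure IsAdmissibleAcceptance {μ : Measure Ω} (XX : Set (Fin d → (Ω →ₘ[μ] ℝ)))
    (EE EE' : Set (Ω →ₘ[μ] ℝ)) (S : (Fin d → (Ω →ₘ[μ] ℝ)) → (Ω →ₘ[μ] ℝ))
    (A : Set (Ω →ₘ[μ] ℝ)) : Prop where
  subset : A ⊆ EE
  preimage_nonempty : ∃ X ∈ XX, S X ∈ A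
  preimage_proper : ∃ X ∈ XX, S X ∉ A
  zero_mem : (0 : Ω →ₘ[μ] ℝ) ∈ A
  mono : ∀ U ∈ A, ∀ V ∈ EE, (0 : Ω →ₘ[μ] ℝ) ≤ V → U + V ∈ A
  convex : ∀ U ∈ A, ∀ V ∈ A, ∀ t : ℝ, 0 ≤ t → t ≤ 1 → t • U + (1 - t) • V ∈ A
  closed : @IsClosed (↥EE) (wtop1 EE EE') {U : ↥EE | (U : Ω →ₘ[μ] ℝ) ∈ A}

/-- The systemic acceptance set `S⁻¹(A) = {X ∈ X : S(X) ∈ A}`. -/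
def sysAcc {μ : Measure Ω} (XX : Set (Fin d → (Ω →ₘ[μ] ℝ)))
    (S : (Fin d → (Ω →ₘ[μ] ℝ)) → (Ω →ₘ[μ] ℝ)) (A : Set (Ω →ₘ[μ] ℝ)) :
    Set (Fin d → (Ω →ₘ[μ] ℝ)) :=
  {X ∈ XX | S X ∈ A}

/-- The "first allocate, then aggregate" systemic risk measure `ρ`. -/
def rho (μ : Measure Ω) (S : (Fin d → (Ω →ₘ[μ] ℝ)) → (Ω →ₘ[μ] ℝ)) (A : Set (Ω →ₘ[μ] ℝ))
    (X : Fin d → (Ω →ₘ[μ] ℝ)) : EReal :=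
  ⨅ m ∈ {m : Fin d → ℝ | S (X + cvec μ m) ∈ A}, ((∑ i, m i : ℝ) : EReal)

/-- The (lower) support function of a set of random vectors. -/
def suppV {μ : Measure Ω} (B : Set (Fin d → (Ω →ₘ[μ] ℝ))) (Z : Fin d → (Ω →ₘ[μ] ℝ)) : EReal :=
  ⨅ X ∈ B, ((pairing X Z : ℝ) : EReal)

/-- The barrier cone of a set of random vectors, inside the dual set `D`. -/
def barrV {μ : Measure Ω} (B D : Set (Fin d → (Ω →ₘ[μ] ℝ))) : Set (Fin d → (Ω →ₘ[μ] ℝ)) :=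
  {Z ∈ D | ⊥ < suppV B Z}

/-- The (lower) support function of a set of random variables. -/
def suppS {μ : Measure Ω} (A : Set (Ω →ₘ[μ] ℝ)) (W : Ω →ₘ[μ] ℝ) : EReal :=
  ⨅ U ∈ A, ((ip U W : ℝ) : EReal)

/-- The barrier cone of a set of random variables, inside the dual set `D`. -/
def barrS {μ : Measure Ω} (A D : Set (Ω →ₘ[μ] ℝ)) : Set (Ω →ₘ[μ] ℝ) :=
  {W ∈ D | ⊥ < suppS A W}

/-- The generic penalty function with dual variables `W` ranging over `K`. -/
def penalty {μ : Measure Ω} (XX : Set (Fin d → (Ω →ₘ[μ] ℝ)))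
    (A : Set (Ω →ₘ[μ] ℝ)) (S : (Fin d → (Ω →ₘ[μ] ℝ)) → (Ω →ₘ[μ] ℝ))
    (K : Set (Ω →ₘ[μ] ℝ)) (Z : Fin d → (Ω →ₘ[μ] ℝ)) : EReal :=
  ⨆ W ∈ K, (suppS A W +
    ⨅ X ∈ XX, ((pairing X Z - ∫ ω, S X ω * W ω ∂μ : ℝ) : EReal))

/-- a.s. strictly positive random variables. -/
def strictPos (μ : Measure Ω) : Set (Ω →ₘ[μ] ℝ) := {W | ∀ᵐ ω ∂μ, 0 < W ω}

/-- The penalty function `α`. -/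
def alpha {μ : Measure Ω} (XX : Set (Fin d → (Ω →ₘ[μ] ℝ))) (EE' : Set (Ω →ₘ[μ] ℝ))
    (A : Set (Ω →ₘ[μ] ℝ)) (S : (Fin d → (Ω →ₘ[μ] ℝ)) → (Ω →ₘ[μ] ℝ)) :
    (Fin d → (Ω →ₘ[μ] ℝ)) → EReal :=
  penalty XX A S (barrS A EE')

/-- The penalty function `α⁺`. -/
def alphaPlus {μ : Measure Ω} (XX : Set (Fin d → (Ω →ₘ[μ] ℝ))) (EE' : Set (Ω →ₘ[μ] ℝ))
    (A : Set (Ω →ₘ[μ] ℝ)) (S : (Fin d → (Ω →ₘ[μ] ℝ)) → (Ω →ₘ[μ] ℝ)) :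
    (Fin d → (Ω →ₘ[μ] ℝ)) → EReal :=
  penalty XX A S (barrS A EE' ∩ (strictPos μ ∪ {0}))

/-- a.s. strictly positive random vectors. -/
def strictPosV (μ : Measure Ω) (d : ℕ) : Set (Fin d → (Ω →ₘ[μ] ℝ)) :=
  {Z | ∀ i, ∀ᵐ ω ∂μ, 0 < Z i ω}

/-- The set `C` of nonnegative dual vectors with all components of expectation one. -/
def Cset {μ : Measure Ω} (XX' : Set (Fin d → (Ω →ₘ[μ] ℝ))) : Set (Fin d → (Ω →ₘ[μ] ℝ)) :=
  {Z ∈ XX' | (∀ i, (0 : Ω →ₘ[μ] ℝ) ≤ Z i) ∧ ∀ i, (∫ ω, Z i ω ∂μ) = 1}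

/-- A map with values in `[−∞,∞]` is proper on `P` if it never attains `−∞` on `P`
and is finite somewhere on `P`. -/
def ProperOn {β : Type*} (P : Set β) (f : β → EReal) : Prop :=
  (∀ x ∈ P, f x ≠ ⊥) ∧ ∃ x ∈ P, f x ≠ ⊤

/-- The positive part of an extended real number, as an extended nonnegative real. -/
def epos (x : EReal) : ℝ≥0∞ := if x = ⊤ then ⊤ else ENNReal.ofReal x.toReal

/-- The integral of an extended-real-valued function. -/
def eintegral (μ : Measure Ω) (g : Ω → EReal) : EReal :=
  ((∫⁻ ω, epos (g ω) ∂μ : ℝ≥0∞) : EReal) - ((∫⁻ ω, epos (-(g ω)) ∂μ : ℝ≥0∞) : EReal)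

section Pairing

variable {μ : Measure Ω}

lemma AEEqFun.nonneg_iff_ae {f : Ω →ₘ[μ] ℝ} : 0 ≤ f ↔ ∀ᵐ ω ∂μ, 0 ≤ f ω := by
  rw [← AEEqFun.coeFn_le]
  refine eventually_congr ?_
  filter_upwards [AEEqFun.coeFn_zero (β := ℝ) (μ := μ)] with ω h
  rw [h, Pi.zero_apply]

lemma AEEqFun.smul_le_smul_of_nonneg_left {c : ℝ} (hc : 0 ≤ c) {f g : Ω →ₘ[μ] ℝ} (h : f ≤ g) :
    c • f ≤ c • g := by
  rw [← AEEqFun.coeFn_le] at h ⊢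
  filter_upwards [h, AEEqFun.coeFn_smul c f, AEEqFun.coeFn_smul c g] with ω h₁ h₂ h₃
  simpa [h₂, h₃] using mul_le_mul_of_nonneg_left h₁ hc

lemma AEEqFun.add_le_add {f g h k : Ω →ₘ[μ] ℝ} (h₁ : f ≤ g) (h₂ : h ≤ k) : f + h ≤ g + k := by
  rw [← AEEqFun.coeFn_le] at h₁ h₂ ⊢
  filter_upwards [h₁, h₂, AEEqFun.coeFn_add f h, AEEqFun.coeFn_add g k] with ω a₁ a₂ a₃ a₄
  simpa [a₃, a₄] using _root_.add_le_add a₁ a₂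

lemma ip_comm (U W : Ω →ₘ[μ] ℝ) : ip U W = ip W U :=
  integral_congr_ae (Eventually.of_forall fun _ => mul_comm _ _)

lemma ip_zero_left (W : Ω →ₘ[μ] ℝ) : ip 0 W = 0 := by
  rw [ip, ← integral_zero Ω ℝ]
  refine integral_congr_ae ?_
  filter_upwards [AEEqFun.coeFn_zero (β := ℝ) (μ := μ)] with ω h
  simp [h]

lemma ip_zero_right (U : Ω →ₘ[μ] ℝ) : ip U 0 = 0 := by
  rw [ip_comm, ip_zero_left]

lemma ip_smul_left (c : ℝ) (U W : Ω →ₘ[μ] ℝ) : ip (c • U) W = c * ip U W := by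
  rw [ip, ip, ← integral_const_mul]
  refine integral_congr_ae ?_
  filter_upwards [AEEqFun.coeFn_smul c U] with ω h
  simp [h, mul_assoc]

lemma ip_smul_right (c : ℝ) (U W : Ω →ₘ[μ] ℝ) : ip U (c • W) = c * ip U W := by
  rw [ip_comm, ip_smul_left, ip_comm]

lemma ip_add_left {U V W : Ω →ₘ[μ] ℝ} (hU : Integrable (fun ω => U ω * W ω) μ)
    (hV : Integrable (fun ω => V ω * W ω) μ) : ip (U + V) W = ip U W + ip V W := by
  rw [ip, ip, ip, ← integral_add hU hV]
  refine integral_congr_ae ?_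
  filter_upwards [AEEqFun.coeFn_add U V] with ω h
  simp [h, add_mul]

lemma ip_const_left (c : ℝ) (W : Ω →ₘ[μ] ℝ) :
    ip (AEEqFun.const Ω c) W = c * ∫ ω, W ω ∂μ := by
  rw [ip, ← integral_const_mul]
  refine integral_congr_ae ?_
  filter_upwards [AEEqFun.coeFn_const (μ := μ) Ω c] with ω h
  simp [h]

lemma ip_mono_left {U V W : Ω →ₘ[μ] ℝ} (hUV : U ≤ V) (hW : 0 ≤ W)
    (hU : Integrable (fun ω => U ω * W ω) μ) (hV : Integrable (fun ω => V ω * W ω) μ) :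
    ip U W ≤ ip V W := by
  refine integral_mono_ae hU hV ?_
  rw [← AEEqFun.coeFn_le] at hUV
  filter_upwards [hUV, AEEqFun.nonneg_iff_ae.1 hW] with ω h₁ h₂
  exact mul_le_mul_of_nonneg_right h₁ h₂

end Pairing

section Admissible

variable {μ : Measure Ω} {L : Set (Ω →ₘ[μ] ℝ)} {nrm : (Ω →ₘ[μ] ℝ) → ℝ}

def IsAdmissible.toSubmodule (hL : IsAdmissible L nrm) : Submodule ℝ (Ω →ₘ[μ] ℝ) where
  carrier := L
  add_mem' hf hg := hL.add_mem _ hf _ hg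
  zero_mem' := hL.zero_mem
  smul_mem' c _ hf := hL.smul_mem c _ hf

lemma IsAdmissible.const_mem (hL : IsAdmissible L nrm) (c : ℝ) : AEEqFun.const Ω c ∈ L := by
  refine hL.linfty_subset _ ⟨|c|, ?_⟩
  filter_upwards [AEEqFun.coeFn_const (μ := μ) Ω c] with ω h
  rw [h, Function.const_apply]

lemma IsAdmissible.integrable_of_mem_kdual (hL : IsAdmissible L nrm) {W : Ω →ₘ[μ] ℝ}
    (hW : W ∈ kdual L) : Integrable W μ := by
  refine (hW _ (hL.const_mem 1)).congr ?_
  filter_upwards [AEEqFun.coeFn_const (μ := μ) Ω (1 : ℝ)] with ω h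
  simp [h]

def kdualSubmodule (L : Set (Ω →ₘ[μ] ℝ)) : Submodule ℝ (Ω →ₘ[μ] ℝ) where
  carrier := kdual L
  add_mem' {W V} hW hV f hf := ((hW f hf).add (hV f hf)).congr <| by
    filter_upwards [AEEqFun.coeFn_add W V] with ω h
    simp [h, mul_add]
  zero_mem' f _ := (integrable_zero _ _ _).congr <| by
    filter_upwards [AEEqFun.coeFn_zero (β := ℝ) (μ := μ)] with ω h
    simp [h]
  smul_mem' c W hW f hf := ((hW f hf).const_mul c).congr <| by
    filter_upwards [AEEqFun.coeFn_smul c W] with ω h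
    simp [h, mul_left_comm]

lemma ip_smul_add_smul_right {U W₁ W₂ : Ω →ₘ[μ] ℝ} (hU : U ∈ L) (hW₁ : W₁ ∈ kdual L)
    (hW₂ : W₂ ∈ kdual L) (a b : ℝ) :
    ip U (a • W₁ + b • W₂) = a * ip U W₁ + b * ip U W₂ := by
  have hint : ∀ {W}, W ∈ kdual L → Integrable (fun ω => W ω * U ω) μ := fun hW =>
    (hW U hU).congr (Eventually.of_forall fun _ => mul_comm _ _)
  rw [ip_comm, ip_add_left (hint ((kdualSubmodule L).smul_mem a hW₁))
    (hint ((kdualSubmodule L).smul_mem b hW₂)), ip_smul_left, ip_smul_left, ip_comm W₁,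
    ip_comm W₂]

lemma ip_sum_smul_left (hL : IsAdmissible L nrm) {ι : Type*} (t : Finset ι) (c : ι → ℝ)
    {U : ι → Ω →ₘ[μ] ℝ} (hU : ∀ j ∈ t, U j ∈ L) {W : Ω →ₘ[μ] ℝ} (hW : W ∈ kdual L) :
    ip (∑ j ∈ t, c j • U j) W = ∑ j ∈ t, c j * ip (U j) W := by
  classical
  induction t using Finset.induction_on with
  | empty => simp [ip_zero_left]
  | insert a t ha ih =>
    have hUt : ∀ j ∈ t, U j ∈ L := fun j hj => hU j (Finset.mem_insert_of_mem hj)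
    have hsum : ∑ j ∈ t, c j • U j ∈ L :=
      hL.toSubmodule.sum_mem fun j hj => hL.toSubmodule.smul_mem _ (hUt j hj)
    rw [Finset.sum_insert ha, Finset.sum_insert ha,
      ip_add_left (hW _ (hL.smul_mem _ _ (hU a (Finset.mem_insert_self a t)))) (hW _ hsum),
      ip_smul_left, ih hUt]

end Admissible

section Product

variable {μ : Measure Ω} {Li : Fin d → Set (Ω →ₘ[μ] ℝ)} {nrmX : Fin d → (Ω →ₘ[μ] ℝ) → ℝ}

def prodSubmodule (hLi : ∀ i, IsAdmissible (Li i) (nrmX i)) :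
    Submodule ℝ (Fin d → Ω →ₘ[μ] ℝ) where
  carrier := prodSet Li
  add_mem' hX hY i := (hLi i).add_mem _ (hX i) _ (hY i)
  zero_mem' i := (hLi i).zero_mem
  smul_mem' c _ hX i := (hLi i).smul_mem c _ (hX i)

lemma pairing_zero_left (Z : Fin d → Ω →ₘ[μ] ℝ) : pairing 0 Z = 0 :=
  Finset.sum_eq_zero fun i _ => ip_zero_left (Z i)

lemma pairing_smul_left (c : ℝ) (X Z : Fin d → Ω →ₘ[μ] ℝ) :
    pairing (c • X) Z = c * pairing X Z := by
  simp only [pairing, Finset.mul_sum, Pi.smul_apply, ip_smul_left]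

lemma pairing_sum_smul_left (hLi : ∀ i, IsAdmissible (Li i) (nrmX i)) {ι : Type*}
    (t : Finset ι) (c : ι → ℝ) {X : ι → Fin d → Ω →ₘ[μ] ℝ} (hX : ∀ j ∈ t, X j ∈ prodSet Li)
    {Z : Fin d → Ω →ₘ[μ] ℝ} (hZ : Z ∈ prodSet fun i => kdual (Li i)) :
    pairing (∑ j ∈ t, c j • X j) Z = ∑ j ∈ t, c j * pairing (X j) Z := by
  simp only [pairing, Finset.mul_sum]
  rw [Finset.sum_comm]
  refine Finset.sum_congr rfl fun i _ => ?_
  rw [Finset.sum_apply]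
  exact ip_sum_smul_left (hLi i) t c (fun j hj => hX j hj i) (hZ i)

end Product

section Impact

variable {μ : Measure Ω} {Li : Fin d → Set (Ω →ₘ[μ] ℝ)} {nrmX : Fin d → (Ω →ₘ[μ] ℝ) → ℝ}
  {XX' : Set (Fin d → Ω →ₘ[μ] ℝ)} {EE EE' : Set (Ω →ₘ[μ] ℝ)}
  {S : (Fin d → Ω →ₘ[μ] ℝ) → Ω →ₘ[μ] ℝ}

lemma IsAdmissibleImpact.smul_of_nonneg (hS : IsAdmissibleImpact (prodSet Li) XX' EE EE' S)
    (hph : ∀ c : ℝ, 0 < c → ∀ X ∈ prodSet Li, S (c • X) = c • S X)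
    {c : ℝ} (hc : 0 ≤ c) {X : Fin d → Ω →ₘ[μ] ℝ} (hX : X ∈ prodSet Li) :
    S (c • X) = c • S X := by
  rcases hc.lt_or_eq with hc | rfl
  · exact hph c hc X hX
  · rw [zero_smul, zero_smul, hS.normalized]

lemma IsAdmissibleImpact.add_le (hLi : ∀ i, IsAdmissible (Li i) (nrmX i))
    (hS : IsAdmissibleImpact (prodSet Li) XX' EE EE' S)
    (hph : ∀ c : ℝ, 0 < c → ∀ X ∈ prodSet Li, S (c • X) = c • S X)
    {X Y : Fin d → Ω →ₘ[μ] ℝ} (hX : X ∈ prodSet Li) (hY : Y ∈ prodSet Li) :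
    S X + S Y ≤ S (X + Y) := by
  have h := hS.concave X hX Y hY (1 / 2) (by norm_num) (by norm_num)
  rw [show (1 / 2 : ℝ) • X + (1 - 1 / 2 : ℝ) • Y = (1 / 2 : ℝ) • (X + Y) by module,
    hph _ (by norm_num) _ ((prodSubmodule hLi).add_mem hX hY)] at h
  calc S X + S Y = (2 : ℝ) • ((1 / 2 : ℝ) • S X + (1 - 1 / 2 : ℝ) • S Y) := by module
    _ ≤ (2 : ℝ) • ((1 / 2 : ℝ) • S (X + Y)) := AEEqFun.smul_le_smul_of_nonneg_left zero_le_two h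
    _ = S (X + Y) := by module

lemma IsAdmissibleImpact.sum_smul_le (hLi : ∀ i, IsAdmissible (Li i) (nrmX i))
    (hS : IsAdmissibleImpact (prodSet Li) XX' EE EE' S)
    (hph : ∀ c : ℝ, 0 < c → ∀ X ∈ prodSet Li, S (c • X) = c • S X)
    {ι : Type*} (t : Finset ι) {c : ι → ℝ} (hc : ∀ j ∈ t, 0 ≤ c j)
    {X : ι → Fin d → Ω →ₘ[μ] ℝ} (hX : ∀ j ∈ t, X j ∈ prodSet Li) :
    ∑ j ∈ t, c j • S (X j) ≤ S (∑ j ∈ t, c j • X j) := by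
  classical
  induction t using Finset.induction_on with
  | empty => simp [hS.normalized]
  | insert a t ha ih =>
    have ha' := Finset.mem_insert_self a t
    have hXt : ∀ j ∈ t, X j ∈ prodSet Li := fun j hj => hX j (Finset.mem_insert_of_mem hj)
    rw [Finset.sum_insert ha, Finset.sum_insert ha,
      ← hS.smul_of_nonneg hph (hc a ha') (hX a ha')]
    refine (AEEqFun.add_le_add le_rfl
      (ih (fun j hj => hc j (Finset.mem_insert_of_mem hj)) hXt)).trans
      (hS.add_le hLi hph ((prodSubmodule hLi).smul_mem _ (hX a ha'))
        ((prodSubmodule hLi).sum_mem fun j hj => (prodSubmodule hLi).smul_mem _ (hXt j hj)))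

end Impact

lemma biInf_eq_bot_of_neg {β : Type*} [SMul ℝ β] {B : Set β} (f : β → ℝ)
    (hB : ∀ c : ℝ, 0 < c → ∀ x ∈ B, c • x ∈ B) (hf : ∀ (c : ℝ) x, f (c • x) = c * f x)
    {x : β} (hx : x ∈ B) (hfx : f x < 0) : ⨅ y ∈ B, (f y : EReal) = ⊥ := by
  refine (EReal.eq_bot_iff_forall_lt _).2 fun r => ?_
  have hc : 0 < (|r| + 1) / -f x := div_pos (by positivity) (neg_pos.2 hfx)
  refine (iInf₂_le _ (hB _ hc x hx)).trans_lt ?_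
  have : (|r| + 1) / -f x * f x = -(|r| + 1) := by
    field_simp [hfx.ne]
  rw [hf, this, EReal.coe_lt_coe_iff]
  linarith [neg_abs_le r]

section Barrier

variable {μ : Measure Ω} {A D : Set (Ω →ₘ[μ] ℝ)} {W : Ω →ₘ[μ] ℝ}

lemma ip_nonneg_of_mem_barrS (hcone : ∀ c : ℝ, 0 < c → ∀ U ∈ A, c • U ∈ A)
    (hW : W ∈ barrS A D) {U : Ω →ₘ[μ] ℝ} (hU : U ∈ A) : 0 ≤ ip U W := by
  by_contra! h
  exact hW.2.ne' (biInf_eq_bot_of_neg (ip · W) hcone (fun c U => ip_smul_left c U W) hU h)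

lemma mem_barrS_of_ip_nonneg (hWD : W ∈ D) (h : ∀ U ∈ A, 0 ≤ ip U W) : W ∈ barrS A D :=
  ⟨hWD, (EReal.bot_lt_coe 0).trans_le (le_iInf₂ fun U hU => EReal.coe_le_coe_iff.2 (h U hU))⟩

lemma suppS_eq_zero_of_mem_barrS (h0 : 0 ∈ A) (hcone : ∀ c : ℝ, 0 < c → ∀ U ∈ A, c • U ∈ A)
    (hW : W ∈ barrS A D) : suppS A W = 0 := by
  refine le_antisymm ?_ (le_iInf₂ fun U hU => ?_)
  · calc suppS A W ≤ ((ip 0 W : ℝ) : EReal) := iInf₂_le 0 h0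
      _ = 0 := by rw [ip_zero_left, EReal.coe_zero]
  · exact EReal.coe_nonneg.2 (ip_nonneg_of_mem_barrS hcone hW hU)

variable {L : Set (Ω →ₘ[μ] ℝ)} {nrm : (Ω →ₘ[μ] ℝ) → ℝ}

lemma smul_add_smul_mem_barrS (hAL : A ⊆ L) (hcone : ∀ c : ℝ, 0 < c → ∀ U ∈ A, c • U ∈ A)
    {W₁ W₂ : Ω →ₘ[μ] ℝ} (hW₁ : W₁ ∈ barrS A (kdual L)) (hW₂ : W₂ ∈ barrS A (kdual L))
    {a b : ℝ} (ha : 0 ≤ a) (hb : 0 ≤ b) : a • W₁ + b • W₂ ∈ barrS A (kdual L) := by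
  refine mem_barrS_of_ip_nonneg ((kdualSubmodule L).add_mem
    ((kdualSubmodule L).smul_mem a hW₁.1) ((kdualSubmodule L).smul_mem b hW₂.1)) fun U hU => ?_
  rw [ip_smul_add_smul_right (hAL hU) hW₁.1 hW₂.1]
  have := ip_nonneg_of_mem_barrS hcone hW₁ hU
  have := ip_nonneg_of_mem_barrS hcone hW₂ hU
  positivity

lemma smul_mem_barrS (hAL : A ⊆ L) (hcone : ∀ c : ℝ, 0 < c → ∀ U ∈ A, c • U ∈ A)
    (hW : W ∈ barrS A (kdual L)) {a : ℝ} (ha : 0 ≤ a) : a • W ∈ barrS A (kdual L) := by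
  simpa using smul_add_smul_mem_barrS hAL hcone hW hW ha le_rfl

lemma zero_mem_barrS : (0 : Ω →ₘ[μ] ℝ) ∈ barrS A (kdual L) :=
  mem_barrS_of_ip_nonneg (kdualSubmodule L).zero_mem fun U _ => (ip_zero_right U).ge

lemma integral_abs_inv_smul_le_one {W : Ω →ₘ[μ] ℝ} (hW : 0 ≤ W) {M : ℝ} (hM : 0 < M)
    (hWM : ∫ ω, W ω ∂μ ≤ M) : ∫ ω, |(M⁻¹ • W) ω| ∂μ ≤ 1 := by
  calc ∫ ω, |(M⁻¹ • W) ω| ∂μ = M⁻¹ * ∫ ω, W ω ∂μ := by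
        rw [← integral_const_mul]
        refine integral_congr_ae ?_
        filter_upwards [AEEqFun.coeFn_smul M⁻¹ W, AEEqFun.nonneg_iff_ae.1 hW] with ω h h'
        simp [h, abs_of_nonneg h', hM.le]
    _ ≤ 1 := by rwa [inv_mul_le_iff₀ hM, mul_one]

/-- Testing against indicators, which lie in `E₊ ⊆ A`, shows that `W` has nonnegative
integral over every measurable set. -/
lemma nonneg_of_mem_barrS (hL : IsAdmissible L nrm) (h0 : 0 ∈ A)
    (hmono : ∀ U ∈ A, ∀ V ∈ L, 0 ≤ V → U + V ∈ A)
    (hcone : ∀ c : ℝ, 0 < c → ∀ U ∈ A, c • U ∈ A) (hW : W ∈ barrS A (kdual L)) : 0 ≤ W := by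
  refine AEEqFun.nonneg_iff_ae.2 (ae_nonneg_of_forall_setIntegral_nonneg
    (hL.integrable_of_mem_kdual hW.1) fun s hs _ => ?_)
  let V : Ω →ₘ[μ] ℝ := AEEqFun.mk (s.indicator 1)
    ((stronglyMeasurable_one.indicator hs).aestronglyMeasurable)
  have hV : ⇑V =ᵐ[μ] s.indicator 1 := AEEqFun.coeFn_mk _ _
  have hVL : V ∈ L := hL.linfty_subset V ⟨1, by
    filter_upwards [hV] with ω h
    rw [h]
    by_cases hω : ω ∈ s <;> simp [hω]⟩
  have hVA : V ∈ A := by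
    simpa using hmono 0 h0 V hVL (AEEqFun.nonneg_iff_ae.2 (by
      filter_upwards [hV] with ω h
      rw [h]
      exact Set.indicator_nonneg (fun _ _ => zero_le_one) ω))
  have hVW : ip V W = ∫ ω in s, W ω ∂μ := by
    rw [ip, ← integral_indicator hs]
    refine integral_congr_ae ?_
    filter_upwards [hV] with ω h
    by_cases hω : ω ∈ s <;> simp [h, hω]
  exact hVW ▸ ip_nonneg_of_mem_barrS hcone hW hVA

end Barrier

section Separation

open scoped Topology

variable {μ : Measure Ω} {L : Set (Ω →ₘ[μ] ℝ)} {nrm : (Ω →ₘ[μ] ℝ) → ℝ}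

/-- The weak topology of `WeakBilin (ipForm hL)` is, definitionally,
`σ(L, L') = wtop1 L (kdual L)`. -/
def ipForm (hL : IsAdmissible L nrm) : hL.toSubmodule →ₗ[ℝ] kdualSubmodule L →ₗ[ℝ] ℝ :=
  LinearMap.mk₂ ℝ (fun U W => ip (U : Ω →ₘ[μ] ℝ) W)
    (fun U₁ U₂ W => ip_add_left (W.2 _ U₁.2) (W.2 _ U₂.2))
    (fun c U W => by simpa using ip_smul_left c (U : Ω →ₘ[μ] ℝ) W)
    (fun U W₁ W₂ => by simpa using ip_smul_add_smul_right U.2 W₁.2 W₂.2 1 1)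
    (fun c U W => by simpa using ip_smul_right c (U : Ω →ₘ[μ] ℝ) W)

lemma continuous_ip_left {U : Ω →ₘ[μ] ℝ} (hU : U ∈ L) :
    Continuous[wtop1 (kdual L) L, _] fun W : ↥(kdual L) => ip U W := by
  let _ : TopologicalSpace ↥(kdual L) := wtop1 (kdual L) L
  have hind : Continuous fun (W : ↥(kdual L)) (V : ↥L) => ip (W : Ω →ₘ[μ] ℝ) V :=
    continuous_induced_dom
  simp_rw [ip_comm U]
  exact (continuous_apply (⟨U, hU⟩ : ↥L)).comp hind

lemma exists_kdual_separating (hL : IsAdmissible L nrm) {A : Set (Ω →ₘ[μ] ℝ)} (hAL : A ⊆ L)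
    (hconv : ∀ U ∈ A, ∀ V ∈ A, ∀ t : ℝ, 0 ≤ t → t ≤ 1 → t • U + (1 - t) • V ∈ A)
    (hclosed : IsClosed[wtop1 L (kdual L)] {U : ↥L | (U : Ω →ₘ[μ] ℝ) ∈ A})
    {U : Ω →ₘ[μ] ℝ} (hU : U ∈ L) (hUA : U ∉ A) :
    ∃ W ∈ kdual L, ∃ u : ℝ, ip U W < u ∧ ∀ V ∈ A, u < ip V W := by
  have hconv' : Convex ℝ {x : WeakBilin (ipForm hL) | Subtype.val x ∈ A} := by
    intro x hx y hy a b ha hb hab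
    obtain rfl : b = 1 - a := by linarith
    exact hconv _ hx _ hy a ha (by linarith)
  have hclosed' : IsClosed {x : WeakBilin (ipForm hL) | Subtype.val x ∈ A} := hclosed
  obtain ⟨f, u, hfU, hfA⟩ :=
    geometric_hahn_banach_point_closed hconv' hclosed' (x := ⟨U, hU⟩) hUA
  obtain ⟨W, rfl⟩ := LinearMap.dualEmbedding_surjective (ipForm hL) f
  exact ⟨W, W.2, u, hfU, fun V hV => hfA (⟨V, hAL hV⟩ : WeakBilin (ipForm hL)) hV⟩

lemma mem_of_forall_mem_barrS_ip_nonneg (hL : IsAdmissible L nrm) {A : Set (Ω →ₘ[μ] ℝ)}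
    (hAL : A ⊆ L)
    (hconv : ∀ U ∈ A, ∀ V ∈ A, ∀ t : ℝ, 0 ≤ t → t ≤ 1 → t • U + (1 - t) • V ∈ A)
    (hclosed : IsClosed[wtop1 L (kdual L)] {U : ↥L | (U : Ω →ₘ[μ] ℝ) ∈ A})
    (h0 : 0 ∈ A) {U : Ω →ₘ[μ] ℝ} (hU : U ∈ L)
    (h : ∀ W ∈ barrS A (kdual L), 0 ≤ ip U W) : U ∈ A := by
  by_contra hUA
  obtain ⟨W, hW, u, hUu, huA⟩ := exists_kdual_separating hL hAL hconv hclosed hU hUA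
  have hu : u < 0 := ip_zero_left W ▸ huA 0 h0
  have hWbarr : W ∈ barrS A (kdual L) :=
    ⟨hW, (EReal.bot_lt_coe u).trans_le (le_iInf₂ fun V hV => EReal.coe_le_coe_iff.2 (huA V hV).le)⟩
  linarith [h W hWbarr]

end Separation

lemma exists_nonneg_separating {ι : Type*} [Fintype ι] {C : Set (ι → ℝ)} (h0 : 0 ∈ C)
    (hC : ∀ y ∈ C, ∀ z ∈ C, ∀ a b : ℝ, 0 ≤ a → 0 ≤ b → a • y + b • z ∈ C) (b : ι → ℝ)
    (hb : ∀ y ∈ C, ∃ j, b j ≤ y j) :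
    ∃ w : ι → ℝ, (∀ j, 0 ≤ w j) ∧ (∀ y ∈ C, 0 ≤ ∑ j, w j * y j) ∧
      ∀ y : ι → ℝ, (∀ j, y j < b j) → ∑ j, w j * y j < 0 := by
  classical
  let O : Set (ι → ℝ) := Set.univ.pi fun j => Set.Iio (b j)
  have hCconv : Convex ℝ C := fun y hy z hz a b ha hb _ => hC y hy z hz a b ha hb
  have hdisj : Disjoint O C := Set.disjoint_left.2 fun y hyO hyC => by
    obtain ⟨j, hj⟩ := hb y hyC
    exact (hj.trans_lt (hyO j (Set.mem_univ j))).false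
  obtain ⟨f, u, hfO, hfC⟩ := geometric_hahn_banach_open
    (convex_pi fun j _ => convex_Iio (b j)) (isOpen_set_pi Set.finite_univ fun j _ => isOpen_Iio)
    hCconv hdisj
  have hf : ∀ y, f y = ∑ j, f (Pi.single j 1) * y j := fun y => by
    conv_lhs => rw [← Finset.univ_sum_single y]
    refine (map_sum f _ _).trans (Finset.sum_congr rfl fun j _ => ?_)
    rw [show Pi.single j (y j) = y j • (Pi.single j 1 : ι → ℝ) by
      simpa using Pi.single_smul' j (y j) (1 : ℝ), map_smul, smul_eq_mul, mul_comm]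
  have hu : u ≤ 0 := by simpa using hfC 0 h0
  have hfO' : ∀ y : ι → ℝ, (∀ j, y j < b j) → f y < 0 := fun y hy =>
    (hfO y fun j _ => hy j).trans_le hu
  refine ⟨fun j => f (Pi.single j 1), fun j => ?_, fun y hy => ?_, fun y hy => ?_⟩
  · -- the box is unbounded below in the direction `-eⱼ`
    set y₀ : ι → ℝ := fun k => b k - 1
    have hy₀ : ∀ t : ℝ, 0 ≤ t → f (y₀ - t • Pi.single j 1) < 0 := fun t ht => hfO' _ fun k => by
      have : 0 ≤ t * (Pi.single j 1 : ι → ℝ) k := mul_nonneg ht (by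
        by_cases h : k = j <;> simp [h])
      simp only [Pi.sub_apply, Pi.smul_apply, smul_eq_mul, y₀]
      linarith
    by_contra! hneg
    have hf₀ : f y₀ < 0 := by simpa using hy₀ 0 le_rfl
    have := hy₀ (f y₀ / f (Pi.single j 1)) (div_nonneg_of_nonpos hf₀.le hneg.le)
    rw [map_sub, map_smul, smul_eq_mul, div_mul_cancel₀ _ hneg.ne, sub_self] at this
    exact this.false
  · rw [← hf]
    by_contra! hneg
    have hc : 0 < (u - 1) / f y := div_pos_of_neg_of_neg (by linarith) hneg
    have := hfC _ (by simpa using hC y hy 0 h0 _ 0 hc.le le_rfl)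
    rw [map_smul, smul_eq_mul, div_mul_cancel₀ _ hneg.ne] at this
    linarith
  · rw [← hf]
    exact hfO' y hy

lemma penalty_le_pairing {μ : Measure Ω} {XX : Set (Fin d → Ω →ₘ[μ] ℝ)}
    {A K : Set (Ω →ₘ[μ] ℝ)} {S : (Fin d → Ω →ₘ[μ] ℝ) → Ω →ₘ[μ] ℝ}
    {X₀ : Fin d → Ω →ₘ[μ] ℝ} (hX₀ : X₀ ∈ sysAcc XX S A) (Z : Fin d → Ω →ₘ[μ] ℝ) :
    penalty XX A S K Z ≤ pairing X₀ Z := by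
  refine iSup₂_le fun W _ => ?_
  calc suppS A W + ⨅ X ∈ XX, ((pairing X Z - ip (S X) W : ℝ) : EReal)
      ≤ (ip (S X₀) W : EReal) + ((pairing X₀ Z - ip (S X₀) W : ℝ) : EReal) :=
        add_le_add (iInf₂_le _ hX₀.2) (iInf₂_le _ hX₀.1)
    _ = pairing X₀ Z := by rw [← EReal.coe_add, add_sub_cancel]

lemma zero_le_alpha {μ : Measure Ω} {XX : Set (Fin d → Ω →ₘ[μ] ℝ)}
    {A D : Set (Ω →ₘ[μ] ℝ)} {S : (Fin d → Ω →ₘ[μ] ℝ) → Ω →ₘ[μ] ℝ} (h0 : 0 ∈ A)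
    (hcone : ∀ c : ℝ, 0 < c → ∀ U ∈ A, c • U ∈ A) {Z : Fin d → Ω →ₘ[μ] ℝ}
    {W : Ω →ₘ[μ] ℝ} (hW : W ∈ barrS A D) (hWX : ∀ X ∈ XX, ip (S X) W ≤ pairing X Z) :
    0 ≤ alpha XX D A S Z := by
  refine le_iSup₂_of_le W hW ?_
  rw [suppS_eq_zero_of_mem_barrS h0 hcone hW, zero_add]
  exact le_iInf₂ fun X hX => EReal.coe_nonneg.2 (sub_nonneg.2 (hWX X hX))

section Conic

variable {μ : Measure Ω} {Li : Fin d → Set (Ω →ₘ[μ] ℝ)} {nrmX : Fin d → (Ω →ₘ[μ] ℝ) → ℝ}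
  {XX' : Set (Fin d → Ω →ₘ[μ] ℝ)} {EE EE' A : Set (Ω →ₘ[μ] ℝ)} {nrmE : (Ω →ₘ[μ] ℝ) → ℝ}
  {S : (Fin d → Ω →ₘ[μ] ℝ) → Ω →ₘ[μ] ℝ} {Z : Fin d → Ω →ₘ[μ] ℝ}

/-- Otherwise, separating the image of `bar(A)` in `ℝ^ι` from the box below the bounds gives
weights `w ≥ 0` such that `Y = ∑ wⱼ Xⱼ` has `E[S(Y) W] ≥ 0` for all `W ∈ bar(A)`; then
`S(Y) ∈ A` by the bipolar theorem, while `E[⟨Y, Z⟩] < 0`. -/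
lemma exists_mem_barrS_forall_ip_le_of_finite (hLi : ∀ i, IsAdmissible (Li i) (nrmX i))
    (hE : IsAdmissible EE nrmE) (hS : IsAdmissibleImpact (prodSet Li) XX' EE EE' S)
    (hA : IsAdmissibleAcceptance (prodSet Li) EE (kdual EE) S A)
    (hph : ∀ c : ℝ, 0 < c → ∀ X ∈ prodSet Li, S (c • X) = c • S X)
    (hcone : ∀ c : ℝ, 0 < c → ∀ U ∈ A, c • U ∈ A) (hZ : Z ∈ prodSet fun i => kdual (Li i))
    (hpos : ∀ X ∈ sysAcc (prodSet Li) S A, 0 ≤ pairing X Z)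
    {ι : Type*} [Fintype ι] (X : ι → Fin d → Ω →ₘ[μ] ℝ) (hX : ∀ j, X j ∈ prodSet Li) :
    ∃ W ∈ barrS A (kdual EE), ∀ j, ip (S (X j)) W ≤ pairing (X j) Z + 1 := by
  classical
  by_contra! hcon
  have hSX : ∀ j, S (X j) ∈ EE := fun j => hS.mapsTo _ (hX j)
  let T : (Ω →ₘ[μ] ℝ) → ι → ℝ := fun W j => ip (S (X j)) W
  obtain ⟨w, hw0, hwC, hwO⟩ := exists_nonneg_separating (C := T '' barrS A (kdual EE))
    ⟨0, zero_mem_barrS, funext fun j => ip_zero_right _⟩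
    (by
      rintro _ ⟨W₁, hW₁, rfl⟩ _ ⟨W₂, hW₂, rfl⟩ a b ha hb
      exact ⟨a • W₁ + b • W₂, smul_add_smul_mem_barrS hA.subset hcone hW₁ hW₂ ha hb,
        funext fun j => ip_smul_add_smul_right (hSX j) hW₁.1 hW₂.1 a b⟩)
    (fun j => pairing (X j) Z + 1)
    (by
      rintro _ ⟨W, hW, rfl⟩
      obtain ⟨j, hj⟩ := hcon W hW
      exact ⟨j, hj.le⟩)
  set Y := ∑ j, w j • X j
  have hY : Y ∈ prodSet Li :=
    (prodSubmodule hLi).sum_mem fun j _ => (prodSubmodule hLi).smul_mem _ (hX j)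
  have hSY : S Y ∈ A := by
    refine mem_of_forall_mem_barrS_ip_nonneg hE hA.subset hA.convex hA.closed hA.zero_mem
      (hS.mapsTo _ hY) fun W hW => ?_
    have hsum : ∑ j, w j • S (X j) ∈ EE :=
      hE.toSubmodule.sum_mem fun j _ => hE.toSubmodule.smul_mem _ (hSX j)
    calc 0 ≤ ∑ j, w j * ip (S (X j)) W := hwC _ ⟨W, hW, rfl⟩
      _ = ip (∑ j, w j • S (X j)) W := (ip_sum_smul_left hE _ _ (fun j _ => hSX j) hW.1).symm
      _ ≤ ip (S Y) W :=
        ip_mono_left (hS.sum_smul_le hLi hph _ (fun j _ => hw0 j) fun j _ => hX j)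
          (nonneg_of_mem_barrS hE hA.zero_mem hA.mono hcone hW) (hW.1 _ hsum)
          (hW.1 _ (hS.mapsTo _ hY))
  have hYZ : pairing Y Z < 0 := by
    rw [pairing_sum_smul_left hLi _ _ (fun j _ => hX j) hZ]
    exact hwO _ fun j => lt_add_one _
  exact (hpos Y ⟨hY, hSY⟩).not_gt hYZ

/-- The constraint at `e` bounds `E[W] = E[S(e) W] / S(e)` for solutions of finitely many
constraints, so they rescale into the compact set `bar(A) ∩ {‖W‖₁ ≤ 1}`, where the finite
intersection property applies. -/
lemma exists_mem_barrS_forall_ip_le_add_one (hLi : ∀ i, IsAdmissible (Li i) (nrmX i))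
    (hE : IsAdmissible EE nrmE) (hS : IsAdmissibleImpact (prodSet Li) XX' EE EE' S)
    (hA : IsAdmissibleAcceptance (prodSet Li) EE (kdual EE) S A)
    (hph : ∀ c : ℝ, 0 < c → ∀ X ∈ prodSet Li, S (c • X) = c • S X)
    (hcone : ∀ c : ℝ, 0 < c → ∀ U ∈ A, c • U ∈ A)
    (hSe : ∃ c : ℝ, 0 < c ∧
        S (cvec μ fun _ => (1 : ℝ)) = (AEEqFun.const Ω c : Ω →ₘ[μ] ℝ))
    (hcompact : @IsCompact (↥(kdual EE)) (wtop1 (kdual EE) EE)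
        {W : ↥(kdual EE) | (W : Ω →ₘ[μ] ℝ) ∈ barrS A (kdual EE) ∧
          (∫ ω, |(W : Ω →ₘ[μ] ℝ) ω| ∂μ) ≤ 1})
    (hZ : Z ∈ prodSet fun i => kdual (Li i))
    (hpos : ∀ X ∈ sysAcc (prodSet Li) S A, 0 ≤ pairing X Z) :
    ∃ W ∈ barrS A (kdual EE), ∀ X ∈ prodSet Li, ip (S X) W ≤ pairing X Z + 1 := by
  classical
  obtain ⟨c, hc, hSe⟩ := hSe
  set e : Fin d → Ω →ₘ[μ] ℝ := cvec μ fun _ => 1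
  have he : e ∈ prodSet Li := fun i => (hLi i).const_mem 1
  have hSeA : S e ∈ A := by
    have hc' : (0 : Ω →ₘ[μ] ℝ) ≤ AEEqFun.const Ω c := AEEqFun.nonneg_iff_ae.2 <| by
      filter_upwards [AEEqFun.coeFn_const (μ := μ) Ω c] with ω h
      simpa [h] using hc.le
    simpa [hSe] using hA.mono 0 hA.zero_mem _ (hE.const_mem c) hc'
  set M := (pairing e Z + 1) / c
  have hM : 0 < M := div_pos (by linarith [hpos e ⟨he, hSeA⟩]) hc
  let _ : TopologicalSpace ↥(kdual EE) := wtop1 (kdual EE) EE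
  let F : ↥(prodSet Li) → Set ↥(kdual EE) := fun X =>
    {W | M * ip (S X) W ≤ pairing (X : Fin d → Ω →ₘ[μ] ℝ) Z + 1}
  have hfin : ∀ u : Finset ↥(prodSet Li), ({W : ↥(kdual EE) |
      (W : Ω →ₘ[μ] ℝ) ∈ barrS A (kdual EE) ∧ (∫ ω, |(W : Ω →ₘ[μ] ℝ) ω| ∂μ) ≤ 1} ∩
      ⋂ X ∈ u, F X).Nonempty := by
    intro u
    obtain ⟨W, hW, hWX⟩ := exists_mem_barrS_forall_ip_le_of_finite hLi hE hS hA hph hcone hZ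
      hpos (fun j : Option u => j.elim e fun X => X.1.1) (by rintro (_ | X); exacts [he, X.1.2])
    have hWM : ∫ ω, W ω ∂μ ≤ M := by
      have := hWX none
      rw [le_div_iff₀ hc]
      simp only [Option.elim, hSe, ip_const_left] at this
      linarith
    refine ⟨⟨M⁻¹ • W, (kdualSubmodule EE).smul_mem _ hW.1⟩,
      ⟨smul_mem_barrS hA.subset hcone hW (inv_nonneg.2 hM.le), integral_abs_inv_smul_le_one
        (nonneg_of_mem_barrS hE hA.zero_mem hA.mono hcone hW) hM hWM⟩,
      Set.mem_iInter₂.2 fun X hX => ?_⟩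
    change M * ip (S X) (M⁻¹ • W) ≤ _
    rw [ip_smul_right, mul_inv_cancel_left₀ hM.ne']
    exact hWX (some ⟨X, hX⟩)
  obtain ⟨W, ⟨hW, -⟩, hWF⟩ := hcompact.inter_iInter_nonempty F (fun X => isClosed_le
    (continuous_const.mul (continuous_ip_left (hS.mapsTo _ X.2))) continuous_const) hfin
  refine ⟨M • W, smul_mem_barrS hA.subset hcone hW hM.le, fun X hX => ?_⟩
  rw [ip_smul_right]
  exact Set.mem_iInter.1 hWF ⟨X, hX⟩

lemma exists_mem_barrS_forall_ip_le (hLi : ∀ i, IsAdmissible (Li i) (nrmX i))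
    (hE : IsAdmissible EE nrmE) (hS : IsAdmissibleImpact (prodSet Li) XX' EE EE' S)
    (hA : IsAdmissibleAcceptance (prodSet Li) EE (kdual EE) S A)
    (hph : ∀ c : ℝ, 0 < c → ∀ X ∈ prodSet Li, S (c • X) = c • S X)
    (hcone : ∀ c : ℝ, 0 < c → ∀ U ∈ A, c • U ∈ A)
    (hSe : ∃ c : ℝ, 0 < c ∧
        S (cvec μ fun _ => (1 : ℝ)) = (AEEqFun.const Ω c : Ω →ₘ[μ] ℝ))
    (hcompact : @IsCompact (↥(kdual EE)) (wtop1 (kdual EE) EE)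
        {W : ↥(kdual EE) | (W : Ω →ₘ[μ] ℝ) ∈ barrS A (kdual EE) ∧
          (∫ ω, |(W : Ω →ₘ[μ] ℝ) ω| ∂μ) ≤ 1})
    (hZ : Z ∈ prodSet fun i => kdual (Li i))
    (hpos : ∀ X ∈ sysAcc (prodSet Li) S A, 0 ≤ pairing X Z) :
    ∃ W ∈ barrS A (kdual EE), ∀ X ∈ prodSet Li, ip (S X) W ≤ pairing X Z := by
  obtain ⟨W, hW, hWX⟩ :=
    exists_mem_barrS_forall_ip_le_add_one hLi hE hS hA hph hcone hSe hcompact hZ hpos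
  refine ⟨W, hW, fun X hX => le_of_forall_pos_lt_add fun ε hε => ?_⟩
  -- homogeneity in `X` shrinks the slack `1` to `ε / 2`
  have h2ε : 0 < 2 / ε := by positivity
  have h := hWX ((2 / ε) • X) ((prodSubmodule hLi).smul_mem _ hX)
  rw [hph _ h2ε X hX, ip_smul_left, pairing_smul_left] at h
  have key : (ip (S X) W - pairing X Z) * (2 / ε) ≤ 1 := by linarith
  rw [← le_div_iff₀ h2ε, one_div_div] at key
  linarith

end Conic

theorem statement14_general {μ : Measure Ω} {d : ℕ}
    (Li : Fin d → Set (Ω →ₘ[μ] ℝ)) (nrmX : Fin d → ((Ω →ₘ[μ] ℝ) → ℝ))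
    (EE : Set (Ω →ₘ[μ] ℝ)) (nrmE : (Ω →ₘ[μ] ℝ) → ℝ)
    (S : (Fin d → (Ω →ₘ[μ] ℝ)) → (Ω →ₘ[μ] ℝ)) (A : Set (Ω →ₘ[μ] ℝ))
    (hLi : ∀ i, IsAdmissible (Li i) (nrmX i))
    (hE : IsAdmissible EE nrmE)
    (hS : IsAdmissibleImpact (prodSet Li) (prodSet fun i => kdual (Li i)) EE (kdual EE) S)
    (hA : IsAdmissibleAcceptance (prodSet Li) EE (kdual EE) S A)
    (hph : ∀ c : ℝ, 0 < c → ∀ X ∈ prodSet Li, S (c • X) = c • S X)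
    (hcone : ∀ c : ℝ, 0 < c → ∀ U ∈ A, c • U ∈ A)
    -- `S(e)` is a strictly positive constant
    (hSe : ∃ c : ℝ, 0 < c ∧
        S (cvec μ fun _ => (1 : ℝ)) = (AEEqFun.const Ω c : Ω →ₘ[μ] ℝ))
    -- `bar(A) ∩ {W ∈ L¹ : ‖W‖₁ ≤ 1}` is `σ(E',E)`-compact
    (hcompact : @IsCompact (↥(kdual EE)) (wtop1 (kdual EE) EE)
        {W : ↥(kdual EE) | (W : Ω →ₘ[μ] ℝ) ∈ barrS A (kdual EE) ∧
          (∫ ω, |(W : Ω →ₘ[μ] ℝ) ω| ∂μ) ≤ 1}) :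
    ∀ Z ∈ prodSet fun i => kdual (Li i),
      suppV (sysAcc (prodSet Li) S A) Z = alpha (prodSet Li) (kdual EE) A S Z := by
  intro Z hZ
  have h0 : (0 : Fin d → Ω →ₘ[μ] ℝ) ∈ sysAcc (prodSet Li) S A :=
    ⟨(prodSubmodule hLi).zero_mem, hS.normalized ▸ hA.zero_mem⟩
  refine le_antisymm ?_ (le_iInf₂ fun X hX => penalty_le_pairing hX Z)
  by_cases hpos : ∀ X ∈ sysAcc (prodSet Li) S A, 0 ≤ pairing X Z
  · obtain ⟨W, hW, hWX⟩ :=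
      exists_mem_barrS_forall_ip_le hLi hE hS hA hph hcone hSe hcompact hZ hpos
    calc suppV (sysAcc (prodSet Li) S A) Z ≤ ((pairing 0 Z : ℝ) : EReal) := iInf₂_le 0 h0
      _ = 0 := by rw [pairing_zero_left, EReal.coe_zero]
      _ ≤ _ := zero_le_alpha hA.zero_mem hcone hW hWX
  · push Not at hpos
    obtain ⟨X, hX, hXZ⟩ := hpos
    have hsys : ∀ c : ℝ, 0 < c → ∀ X ∈ sysAcc (prodSet Li) S A,
        c • X ∈ sysAcc (prodSet Li) S A := fun c hc X hX =>
      ⟨(prodSubmodule hLi).smul_mem c hX.1, (hph c hc X hX.1).symm ▸ hcone c hc _ hX.2⟩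
    exact (biInf_eq_bot_of_neg (pairing · Z) hsys (fun c X => pairing_smul_left c X Z) hX
      hXZ).le.trans bot_le

/-- in the conic case, if `S(e)` is a strictly positive constant and the unit
ball slice of `bar(A)` in `L¹` is `σ(E',E)`-compact, then `σ_{S⁻¹(A)} = α`. -/
theorem statement14 {μ : Measure Ω} [IsProbabilityMeasure μ] {d : ℕ}
    (Li : Fin d → Set (Ω →ₘ[μ] ℝ)) (nrmX : Fin d → ((Ω →ₘ[μ] ℝ) → ℝ))
    (EE : Set (Ω →ₘ[μ] ℝ)) (nrmE : (Ω →ₘ[μ] ℝ) → ℝ)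
    (S : (Fin d → (Ω →ₘ[μ] ℝ)) → (Ω →ₘ[μ] ℝ)) (A : Set (Ω →ₘ[μ] ℝ))
    (hLi : ∀ i, IsAdmissible (Li i) (nrmX i))
    (hE : IsAdmissible EE nrmE)
    (hS : IsAdmissibleImpact (prodSet Li) (prodSet fun i => kdual (Li i)) EE (kdual EE) S)
    (hA : IsAdmissibleAcceptance (prodSet Li) EE (kdual EE) S A)
    (hph : ∀ c : ℝ, 0 < c → ∀ X ∈ prodSet Li, S (c • X) = c • S X)
    (hcone : ∀ c : ℝ, 0 < c → ∀ U ∈ A, c • U ∈ A)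
    -- `S(e)` is a strictly positive constant
    (hSe : ∃ c : ℝ, 0 < c ∧
        S (cvec μ fun _ => (1 : ℝ)) = (AEEqFun.const Ω c : Ω →ₘ[μ] ℝ))
    -- `bar(A) ∩ {W ∈ L¹ : ‖W‖₁ ≤ 1}` is `σ(E',E)`-compact
    (hcompact : @IsCompact (↥(kdual EE)) (wtop1 (kdual EE) EE)
        {W : ↥(kdual EE) | (W : Ω →ₘ[μ] ℝ) ∈ barrS A (kdual EE) ∧
          (∫ ω, |(W : Ω →ₘ[μ] ℝ) ω| ∂μ) ≤ 1}) :
    ∀ Z ∈ prodSet fun i => kdual (Li i),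
      suppV (sysAcc (prodSet Li) S A) Z = alpha (prodSet Li) (kdual EE) A S Z :=
  statement14_general Li nrmX EE nrmE S A hLi hE hS hA hph hcone hSe hcompact

end SystemicRisk
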